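/- arXiv:0902.1963 — 2 statements merged into one kernel-verified Lean document; each statement's English description precedes it below -/
import Mathlib

section
/- In the braid group Br_n, the elements a_{i,j} = σ_{j−1}⋯σ_{i+1}σ_i²σ_{i+1}⁻¹⋯σ_{j−1}⁻¹ satisfy, for i<j<k, the relation a_{i,j}a_{i,k}a_{j,k} = a_{i,k}a_{j,k}a_{i,j}. -/
/-- The braid relations on the Artin generators `σ₁, …, σ_{n-1}` (generator `⟨k, _⟩ : Fin (n-1)`
represents `σ_{k+1}`): `σᵢσⱼ = σⱼσᵢ` for `|i - j| > 1` and `σᵢσᵢ₊₁σᵢ = σᵢ₊₁σᵢσᵢ₊₁`. -/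
def braidRels (n : ℕ) : Set (FreeGroup (Fin (n - 1))) :=
  {r | ∃ i j : Fin (n - 1),
      ((i : ℕ) + 1 < (j : ℕ) ∧
        r = FreeGroup.of i * FreeGroup.of j * (FreeGroup.of i)⁻¹ * (FreeGroup.of j)⁻¹) ∨
      ((j : ℕ) = (i : ℕ) + 1 ∧
        r = FreeGroup.of i * FreeGroup.of j * FreeGroup.of i *
              (FreeGroup.of j * FreeGroup.of i * FreeGroup.of j)⁻¹)}

/-- The braid group `Br_n`, presented by the Artin generators and braid relations. -/
abbrev Br (n : ℕ) := PresentedGroup (braidRels n)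

/-- The Artin generator `σᵢ` of `Br n`, for `1 ≤ i ≤ n - 1` (junk value `1` otherwise). -/
def σ {n : ℕ} (i : ℕ) : Br n :=
  if h : i - 1 < n - 1 then PresentedGroup.of ⟨i - 1, h⟩ else 1

/-- The pure braid generator `a_{i,j} = σ_{j-1} ⋯ σ_{i+1} σᵢ² σ_{i+1}⁻¹ ⋯ σ_{j-1}⁻¹`. -/
def braidA {n : ℕ} (i j : ℕ) : Br n :=
  (((List.range' (i + 1) (j - 1 - i)).reverse.map (σ (n := n))).prod) * (σ i) ^ 2 *
    (((List.range' (i + 1) (j - 1 - i)).reverse.map (σ (n := n))).prod)⁻¹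

/-!
Conjugation by `σₖ` fixes `a_{i,j}` for `j < k` and sends `a_{i,k}, a_{j,k}` to `a_{i,k+1}, a_{j,k+1}`,
so it suffices to treat `k = j + 1`. There, with `a = a_{i,j}` and `s = σⱼ`, we have `a_{i,j+1} = s a s⁻¹`
and `a_{j,j+1} = s²`, and the relation becomes `s a s a = a s a s`. This identity is proved by induction
on `j`: for `j = i + 1` it is the braid relation in the form `t s² t s² = (t s)³ = (s t)³ = s² t s² t`,
and conjugation by `σⱼσⱼ₊₁` maps `σⱼ ↦ σⱼ₊₁` and `a_{i,j} ↦ a_{i,j+1}`.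
-/

section Group

variable {G : Type*} [Group G]

theorem conj_mul_eq_of_braid {s t : G} (h : s * t * s = t * s * t) :
    MulAut.conj (s * t) s = t := by
  rw [MulAut.conj_apply, mul_inv_eq_iff_eq_mul, h, mul_assoc]

theorem mul_sq_mul_sq_eq_of_braid {s t : G} (h : s * t * s = t * s * t) :
    t * s ^ 2 * t * s ^ 2 = s ^ 2 * t * s ^ 2 * t :=
  calc t * s ^ 2 * t * s ^ 2 = t * s * (s * t * s) * s := by simp only [sq, mul_assoc]
    _ = t * s * (t * s * t) * s := by rw [h]
    _ = (t * s * t) * (s * t * s) := by simp only [mul_assoc]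
    _ = (s * t * s) * (t * s * t) := by rw [h]
    _ = s * (t * s * t) * s * t := by simp only [mul_assoc]
    _ = s * (s * t * s) * s * t := by rw [h]
    _ = s ^ 2 * t * s ^ 2 * t := by simp only [sq, mul_assoc]

theorem mul_conj_mul_conj_eq_of_braid {s t a : G} (hst : s * t * s = t * s * t)
    (hat : Commute a t) (h : s * a * s * a = a * s * a * s) :
    t * (s * a * s⁻¹) * t * (s * a * s⁻¹) = (s * a * s⁻¹) * t * (s * a * s⁻¹) * t := by
  have hs : MulAut.conj (s * t) s = t := conj_mul_eq_of_braid hst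
  have ha : MulAut.conj (s * t) a = s * a * s⁻¹ := by
    calc (s * t) * a * (s * t)⁻¹ = s * (t * a * t⁻¹) * s⁻¹ := by group
      _ = s * a * s⁻¹ := by rw [hat.symm.mul_inv_cancel]
  have hconj := congrArg (MulAut.conj (s * t)) h
  simpa only [map_mul (MulAut.conj (s * t)), hs, ha] using hconj

end Group

section Braid

variable {n : ℕ}

theorem σ_commute {a b : ℕ} (ha : 1 ≤ a) (hab : a + 1 < b) : Commute (σ (n := n) a) (σ b) := by
  unfold σ
  split_ifs with ha' hb
  · exact PresentedGroup.mk_eq_mk_of_mul_inv_mem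
      ⟨⟨a - 1, ha'⟩, ⟨b - 1, hb⟩, Or.inl ⟨by simp only; omega, by group⟩⟩
  all_goals simp only [Commute.one_left, Commute.one_right]

theorem σ_braid {a : ℕ} (ha : 1 ≤ a) (han : a + 2 ≤ n) :
    σ (n := n) a * σ (a + 1) * σ a = σ (a + 1) * σ a * σ (a + 1) := by
  rw [σ, σ, dif_pos (by omega), dif_pos (by omega)]
  exact PresentedGroup.mk_eq_mk_of_mul_inv_mem ⟨_, _, Or.inr ⟨by simp only; omega, rfl⟩⟩

theorem braidA_self_succ (i : ℕ) : braidA (n := n) i (i + 1) = σ i ^ 2 := by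
  simp [braidA]

theorem braidA_succ {i k : ℕ} (h : i < k) :
    braidA (n := n) i (k + 1) = σ k * braidA i k * (σ k)⁻¹ := by
  obtain ⟨d, rfl⟩ := Nat.exists_eq_add_of_lt h
  have hlen : i + d + 1 + 1 - 1 - i = d + 1 := by omega
  have hlen' : i + d + 1 - 1 - i = d := by omega
  simp only [braidA, hlen, hlen', List.range'_1_concat, List.reverse_concat, List.map_cons,
    List.prod_cons, mul_inv_rev, mul_assoc]
  rw [show i + 1 + d = i + d + 1 by omega]

theorem σ_commute_braidA {i j m : ℕ} (hi : 1 ≤ i) (hij : i < j) (hjm : j < m) :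
    Commute (σ (n := n) m) (braidA i j) := by
  induction j, hij using Nat.le_induction with
  | base => simpa only [braidA_self_succ] using ((σ_commute hi (by omega)).symm.pow_right 2)
  | succ j hij ih =>
    have hj : Commute (σ (n := n) m) (σ j) := (σ_commute (by omega) (by omega)).symm
    rw [braidA_succ hij]
    exact (hj.mul_right (ih (by omega))).mul_right hj.inv_right

theorem σ_mul_braidA_mul_σ_mul_braidA {i j : ℕ} (hi : 1 ≤ i) (hij : i < j) (hjn : j < n) :
    σ (n := n) j * braidA i j * σ j * braidA i j = braidA i j * σ j * braidA i j * σ j := by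
  induction j, hij using Nat.le_induction with
  | base =>
    rw [braidA_self_succ]
    exact mul_sq_mul_sq_eq_of_braid (σ_braid hi (by omega))
  | succ j hij ih =>
    rw [braidA_succ hij]
    exact mul_conj_mul_conj_eq_of_braid (σ_braid (by omega) (by omega))
      (σ_commute_braidA hi hij (Nat.lt_succ_self j)).symm (ih (by omega))

end Braid

/-- Burau relation: `a_{i,j} a_{i,k} a_{j,k} = a_{i,k} a_{j,k} a_{i,j}` for `i < j < k`. -/
theorem burau_triple (n i j k : ℕ) (h1 : 1 ≤ i) (h2 : i < j) (h3 : j < k) (h4 : k ≤ n) :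
    braidA (n := n) i j * braidA i k * braidA j k =
      braidA i k * braidA j k * braidA i j := by
  induction k, h3 using Nat.le_induction with
  | base =>
    have hswap := σ_mul_braidA_mul_σ_mul_braidA (n := n) h1 h2 (by omega)
    rw [braidA_self_succ, braidA_succ h2]
    calc braidA i j * (σ j * braidA i j * (σ j)⁻¹) * σ j ^ 2
        = braidA i j * σ j * braidA i j * σ j := by group
      _ = σ j * braidA i j * (σ j)⁻¹ * σ j ^ 2 * braidA i j := by rw [← hswap]; group
  | succ k hjk ih =>
    have hfix : MulAut.conj (σ k) (braidA (n := n) i j) = braidA i j :=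
      (σ_commute_braidA h1 h2 hjk).mul_inv_cancel
    rw [braidA_succ (h2.trans hjk), braidA_succ hjk, ← MulAut.conj_apply, ← MulAut.conj_apply,
      ← hfix]
    simpa only [map_mul] using congrArg (MulAut.conj (σ k)) (ih (by omega))
end

section
/- In the braid group Br_n, the elements a_{i,j} = σ_{j−1}⋯σ_{i+1}σ_i²σ_{i+1}⁻¹⋯σ_{j−1}⁻¹ satisfy, for i<j<k, the relation a_{i,k}a_{j,k}a_{i,j} = a_{j,k}a_{i,j}a_{i,k}. -/
/-! ### Auxiliary pure group-theoretic lemmas -/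

section GroupAux
variable {G : Type*} [Group G]

private lemma auxS (s t a : G) (h1 : s*a*s = a*s*a) (h2 : t*a = a*t) (h3 : s*t*s = t*s*t) :
    t*(s*a*s⁻¹)*t = (s*a*s⁻¹)*t*(s*a*s⁻¹) := by
  have h4 : s⁻¹ * t * s = t * s * t⁻¹ := by
    calc s⁻¹*t*s = s⁻¹*(t*s*t)*t⁻¹ := by group
      _ = s⁻¹*(s*t*s)*t⁻¹ := by rw [h3]
      _ = t*s*t⁻¹ := by group
  have h5 : t⁻¹ * a = a * t⁻¹ := by
    calc t⁻¹*a = t⁻¹*(a*t)*t⁻¹ := by group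
      _ = t⁻¹*(t*a)*t⁻¹ := by rw [h2]
      _ = a*t⁻¹ := by group
  have key : (s*a*s⁻¹)*t*(s*a*s⁻¹) = t*(s*a*s⁻¹)*t := by
    calc (s*a*s⁻¹)*t*(s*a*s⁻¹) = s*a*(s⁻¹*t*s)*a*s⁻¹ := by group
      _ = s*a*(t*s*t⁻¹)*a*s⁻¹ := by rw [h4]
      _ = s*(a*t)*s*(t⁻¹*a)*s⁻¹ := by group
      _ = s*(t*a)*s*(a*t⁻¹)*s⁻¹ := by rw [← h2, h5]
      _ = s*t*(a*s*a)*t⁻¹*s⁻¹ := by group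
      _ = s*t*(s*a*s)*t⁻¹*s⁻¹ := by rw [← h1]
      _ = (s*t*s)*(a*s*t⁻¹*s⁻¹) := by group
      _ = (t*s*t)*(a*s*t⁻¹*s⁻¹) := by rw [h3]
      _ = t*s*(t*a)*(s*t⁻¹*s⁻¹) := by group
      _ = t*s*(a*t)*(s*t⁻¹*s⁻¹) := by rw [h2]
      _ = t*s*a*(t*s*t⁻¹)*s⁻¹ := by group
      _ = t*s*a*(s⁻¹*t*s)*s⁻¹ := by rw [← h4]
      _ = t*(s*a*s⁻¹)*t := by group
  exact key.symm

private lemma finalG (x y z : G) (h1 : y*x = z*y) (h2 : z*y = x*z) :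
    z^2*y^2*x^2 = y^2*x^2*z^2 := by
  have hz : z = x⁻¹*(y*x) := by
    calc z = x⁻¹*(x*z) := by group
      _ = x⁻¹*(y*x) := by rw [← h1.trans h2]
  have hb : y*x*y = x*y*x := by
    calc y*x*y = x*(x⁻¹*(y*x)*y) := by group
      _ = x*(z*y) := by rw [← hz]
      _ = x*(y*x) := by rw [← h1]
      _ = x*y*x := by group
  have hxS : x*(y*y*x*y*y*x) = (x*y*x)*(x*y*x)*x := by
    calc x*(y*y*x*y*y*x) = x*y*(y*x*y)*(y*x) := by group
      _ = x*y*(x*y*x)*(y*x) := by rw [hb]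
      _ = (x*y*x)*(y*x*y)*x := by group
      _ = (x*y*x)*(x*y*x)*x := by rw [hb]
  have hSx : (y*y*x*y*y*x)*x = (x*y*x)*(x*y*x)*x := by
    calc (y*y*x*y*y*x)*x = y*(y*x*y)*(y*x*x) := by group
      _ = y*(x*y*x)*(y*x*x) := by rw [hb]
      _ = (y*x*y)*(x*y*x)*x := by group
      _ = (x*y*x)*(x*y*x)*x := by rw [hb]
  have key : x*(y*y*x*y*y*x) = (y*y*x*y*y*x)*x := hxS.trans hSx.symm
  calc z^2*y^2*x^2 = x⁻¹*((y*y*x*y*y*x)*x) := by rw [hz]; simp only [pow_two]; group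
    _ = x⁻¹*(x*(y*y*x*y*y*x)) := by rw [← key]
    _ = y^2*x^2*z^2 := by rw [hz]; simp only [pow_two]; group

end GroupAux

/-! ### The defining relations in `Br n` -/

private lemma presented_rel {α} {rels : Set (FreeGroup α)} {r} (h : r ∈ rels) :
    PresentedGroup.mk rels r = 1 := by
  rw [PresentedGroup.mk]
  show (QuotientGroup.mk r : PresentedGroup rels) = 1
  rw [QuotientGroup.eq_one_iff]
  exact Subgroup.subset_normalClosure h

private lemma sigma_comm {n : ℕ} (a b : ℕ) (ha : 1 ≤ a) (hab : a + 2 ≤ b) :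
    σ (n := n) a * σ b = σ b * σ a := by
  unfold σ
  by_cases hb : b - 1 < n - 1
  · have haa : a - 1 < n - 1 := by omega
    rw [dif_pos hb, dif_pos haa]
    have hmem : FreeGroup.of (⟨a-1, haa⟩ : Fin (n-1)) * FreeGroup.of ⟨b-1, hb⟩ *
        (FreeGroup.of (⟨a-1, haa⟩ : Fin (n-1)))⁻¹ * (FreeGroup.of (⟨b-1, hb⟩ : Fin (n-1)))⁻¹
        ∈ braidRels n :=
      ⟨⟨a-1, haa⟩, ⟨b-1, hb⟩, Or.inl ⟨by simp; omega, rfl⟩⟩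
    have h1 := presented_rel hmem
    simp only [map_mul, map_inv] at h1
    rw [show PresentedGroup.of (rels := braidRels n) ⟨a-1, haa⟩ =
        PresentedGroup.mk (braidRels n) (FreeGroup.of ⟨a-1, haa⟩) from rfl,
      show PresentedGroup.of (rels := braidRels n) ⟨b-1, hb⟩ =
        PresentedGroup.mk (braidRels n) (FreeGroup.of ⟨b-1, hb⟩) from rfl]
    set x := PresentedGroup.mk (braidRels n) (FreeGroup.of ⟨a-1, haa⟩)
    set y := PresentedGroup.mk (braidRels n) (FreeGroup.of ⟨b-1, hb⟩)
    calc x * y = (x * y * x⁻¹ * y⁻¹) * (y * x) := by group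
      _ = y * x := by rw [h1]; group
  · rw [dif_neg hb]
    by_cases haa : a - 1 < n - 1
    · rw [dif_pos haa, mul_one, one_mul]
    · rw [dif_neg haa]

private lemma sigma_braid {n : ℕ} (a : ℕ) (ha : 1 ≤ a) (han : a + 1 < n) :
    σ (n := n) a * σ (a+1) * σ a = σ (a+1) * σ a * σ (a+1) := by
  unfold σ
  have h1 : a - 1 < n - 1 := by omega
  have h2 : a + 1 - 1 < n - 1 := by omega
  rw [dif_pos h1, dif_pos h2]
  have hmem : FreeGroup.of (⟨a-1, h1⟩ : Fin (n-1)) * FreeGroup.of ⟨a+1-1, h2⟩ *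
      FreeGroup.of ⟨a-1, h1⟩ *
      (FreeGroup.of (⟨a+1-1, h2⟩ : Fin (n-1)) * FreeGroup.of ⟨a-1, h1⟩ *
        FreeGroup.of ⟨a+1-1, h2⟩)⁻¹ ∈ braidRels n :=
    ⟨⟨a-1, h1⟩, ⟨a+1-1, h2⟩, Or.inr ⟨by simp; omega, rfl⟩⟩
  have hr := presented_rel hmem
  simp only [map_mul, map_inv] at hr
  set x := PresentedGroup.mk (braidRels n) (FreeGroup.of ⟨a-1, h1⟩) with hx
  set y := PresentedGroup.mk (braidRels n) (FreeGroup.of ⟨a+1-1, h2⟩) with hy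
  show x * y * x = y * x * y
  calc x * y * x = (x * y * x * (y * x * y)⁻¹) * (y * x * y) := by group
    _ = y * x * y := by rw [hr]; group

/-! ### Band generators -/

/-- The descending product `σ_{b-1} σ_{b-2} ⋯ σ_a`. -/
private def dd {n : ℕ} (a b : ℕ) : Br n :=
  ((List.range' a (b - a)).reverse.map (σ (n := n))).prod

/-- The band generator `a_{j,i} = σ_{j-1} ⋯ σ_{i+1} σᵢ σ_{i+1}⁻¹ ⋯ σ_{j-1}⁻¹`. -/
private def band {n : ℕ} (i j : ℕ) : Br n := dd (i + 1) j * σ i * (dd (i + 1) j)⁻¹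

private lemma braidA_band {n : ℕ} (i j : ℕ) : braidA (n := n) i j = band i j ^ 2 := by
  have h : j - 1 - i = j - (i + 1) := by omega
  rw [braidA, band, dd, h]
  simp only [pow_two]
  group

private lemma dd_succ {n : ℕ} (a b : ℕ) (h : a ≤ b) : dd (n := n) a (b + 1) = σ b * dd a b := by
  have h2 : b + 1 - a = (b - a) + 1 := by omega
  rw [dd, dd, h2, List.range'_concat]
  simp only [List.reverse_append, List.map_append, List.prod_append, List.map_cons,
    List.map_nil, List.prod_cons, List.prod_nil, List.reverse_cons, List.reverse_nil,
    List.nil_append, List.cons_append, mul_one]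
  have : a + 1 * (b - a) = b := by omega
  rw [this]

private lemma band_succ {n : ℕ} (i k : ℕ) (h : i + 1 ≤ k) :
    band (n := n) i (k + 1) = σ k * band i k * (σ k)⁻¹ := by
  rw [band, band, dd_succ _ _ h]
  group

private lemma band_base {n : ℕ} (i : ℕ) : band (n := n) i (i + 1) = σ i := by
  rw [band, dd]
  simp

private lemma comm_dd {n : ℕ} (t a b : ℕ) (ha : 1 ≤ a) (h : b + 1 ≤ t) :
    Commute (σ (n := n) t) (dd a b) := by
  rw [dd]
  apply Commute.list_prod_right
  intro x hx
  simp only [List.mem_map, List.mem_reverse, List.mem_range'] at hx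
  obtain ⟨y, ⟨hy1, hy2⟩, rfl⟩ := hx
  exact (sigma_comm y t (by omega) (by omega)).symm

private lemma comm_band {n : ℕ} (t i j : ℕ) (hi : 1 ≤ i) (hij : i < j) (h : j + 1 ≤ t) :
    Commute (σ (n := n) t) (band i j) := by
  rw [band]
  exact ((comm_dd t (i+1) j (by omega) h).mul_right
    (sigma_comm i t hi (by omega)).symm).mul_right
    (comm_dd t (i+1) j (by omega) h).inv_right

/-- Braid-type relation between `σ_j` and the band `a_{j,i}`. -/
private lemma bandS {n : ℕ} (i : ℕ) (hi : 1 ≤ i) :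
    ∀ j, i + 1 ≤ j → j < n →
      σ (n := n) j * band i j * σ j = band i j * σ j * band i j := by
  intro j hj
  induction j, hj using Nat.le_induction with
  | base =>
    intro hn
    rw [band_base]
    exact (sigma_braid i hi hn).symm
  | succ j hj ih =>
    intro hn
    rw [band_succ i j hj]
    exact auxS (σ j) (σ (j+1)) (band i j) (ih (by omega))
      (comm_band (j+1) i j hi (by omega) (by omega)).eq
      (sigma_braid j (by omega) hn)

/-- BKL relation `a_{k,j} a_{j,i} = a_{k,i} a_{k,j}`. -/
private lemma bandB1 {n : ℕ} (i j : ℕ) (hi : 1 ≤ i) (hij : i < j) :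
    ∀ k, j + 1 ≤ k → k ≤ n →
      band (n := n) j k * band i j = band i k * band j k := by
  intro k hk
  induction k, hk using Nat.le_induction with
  | base =>
    intro _
    rw [band_base (n := n), band_succ (n := n) i j (by omega)]
    group
  | succ k hk ih =>
    intro hn
    rw [band_succ (n := n) j k hk, band_succ (n := n) i k (by omega)]
    have hc := (comm_band (n := n) k i j hi hij (by omega)).eq
    have hc2 : (σ (n := n) k)⁻¹ * band i j * σ k = band i j := by
      calc (σ (n := n) k)⁻¹ * band i j * σ k = (σ k)⁻¹ * (band i j * σ k) := by group
        _ = (σ k)⁻¹ * (σ k * band i j) := by rw [← hc]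
        _ = band i j := by group
    calc σ (n := n) k * band j k * (σ k)⁻¹ * band i j
        = σ k * band j k * ((σ k)⁻¹ * band i j * σ k) * (σ k)⁻¹ := by group
      _ = σ k * band j k * band i j * (σ k)⁻¹ := by rw [hc2]
      _ = σ k * (band j k * band i j) * (σ k)⁻¹ := by group
      _ = σ k * (band i k * band j k) * (σ k)⁻¹ := by rw [ih (by omega)]
      _ = σ k * band i k * (σ k)⁻¹ * (σ k * band j k * (σ k)⁻¹) := by group

/-- BKL relation `a_{k,i} a_{k,j} = a_{j,i} a_{k,i}`. -/
private lemma bandB2 {n : ℕ} (i j : ℕ) (hi : 1 ≤ i) (hij : i < j) :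
    ∀ k, j + 1 ≤ k → k ≤ n →
      band (n := n) i k * band j k = band i j * band i k := by
  intro k hk
  induction k, hk using Nat.le_induction with
  | base =>
    intro hn
    rw [band_base (n := n), band_succ (n := n) i j (by omega)]
    have hS := bandS (n := n) i hi j (by omega) (by omega)
    calc σ (n := n) j * band i j * (σ j)⁻¹ * σ j = σ j * band i j := by group
      _ = (band i j * σ j * band i j) * (σ j)⁻¹ := by rw [← hS]; group
      _ = band i j * (σ j * band i j * (σ j)⁻¹) := by group
  | succ k hk ih =>
    intro hn
    rw [band_succ (n := n) j k hk, band_succ (n := n) i k (by omega)]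
    have hc := (comm_band (n := n) k i j hi hij (by omega)).eq
    calc σ (n := n) k * band i k * (σ k)⁻¹ * (σ k * band j k * (σ k)⁻¹)
        = σ k * (band i k * band j k) * (σ k)⁻¹ := by group
      _ = σ k * (band i j * band i k) * (σ k)⁻¹ := by rw [ih (by omega)]
      _ = (σ k * band i j) * band i k * (σ k)⁻¹ := by group
      _ = (band i j * σ k) * band i k * (σ k)⁻¹ := by rw [hc]
      _ = band i j * (σ k * band i k * (σ k)⁻¹) := by group

/-- Burau relation: `a_{i,k} a_{j,k} a_{i,j} = a_{j,k} a_{i,j} a_{i,k}` for `i < j < k`. -/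
theorem burau_triple' (n i j k : ℕ) (h1 : 1 ≤ i) (h2 : i < j) (h3 : j < k) (h4 : k ≤ n) :
    braidA (n := n) i k * braidA j k * braidA i j =
      braidA j k * braidA i j * braidA i k := by
  rw [braidA_band i k, braidA_band j k, braidA_band i j]
  exact finalG (band i j) (band j k) (band i k)
    (bandB1 i j h1 h2 k (by omega) h4)
    (bandB2 i j h1 h2 k (by omega) h4)
end
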